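/- Let d ≥ 2 and 1 ≤ r < d, and let ρ_r = (1/r) Σ_{l=1}^r E_{ll}. Then for any k ∈ {1,…,d} and any indices i, j with 1 ≤ i ≤ r < j ≤ d, the single-sample second moment of an entry of the off-diagonal B block of the covariant-measurement least squares estimator equals d(d+1)² · ∫_{U(d)} ⟨e_k, U*ρ_r U e_k⟩ · |U_{ik}|² |U_{jk}|² dU = ((r+1)/r) · ((d+1)/(d+2)). -/

import Mathlib

open MeasureTheory ProbabilityTheory Matrix
open scoped ComplexOrder

/-- The Borel (= product) σ-algebra on `d × d` complex matrices. -/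
noncomputable instance matrixMeasurableSpace (d : ℕ) : MeasurableSpace (Matrix (Fin d) (Fin d) ℂ) :=
  MeasurableSpace.pi

/-- A density matrix: positive semidefinite with trace one. -/
def IsDensityMatrix {d : ℕ} (ρ : Matrix (Fin d) (Fin d) ℂ) : Prop :=
  ρ.PosSemidef ∧ ρ.trace = 1

/-- The rank-one projection `U E_{jj} U*`. -/
noncomputable def covProj (d : ℕ) (j : Fin d) (U : Matrix.unitaryGroup (Fin d) ℂ) :
    Matrix (Fin d) (Fin d) ℂ :=
  (U : Matrix (Fin d) (Fin d) ℂ) * Matrix.single j j 1 *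
    star (U : Matrix (Fin d) (Fin d) ℂ)

/-- The outcome law `μ_ρ` of the covariant measurement on the state `ρ`, built from the Haar
probability measure `μ` on the unitary group: the distribution of `U E_{JJ} U*` where `U ~ μ`
and, conditionally on `U`, `J = j` has probability `⟨e_j, U* ρ U e_j⟩`. -/
noncomputable def covariantLaw (d : ℕ) (μ : Measure (Matrix.unitaryGroup (Fin d) ℂ))
    (ρ : Matrix (Fin d) (Fin d) ℂ) : Measure (Matrix (Fin d) (Fin d) ℂ) :=
  Measure.sum fun j : Fin d =>
    Measure.map (covProj d j)
      (μ.withDensity fun U =>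
        ENNReal.ofReal
          ((star (U : Matrix (Fin d) (Fin d) ℂ) * ρ * (U : Matrix (Fin d) (Fin d) ℂ)) j j).re)

/-- The least squares estimator `ρ̂_LS = (1/N) Σ_i ((d+1) P_i - I)`. -/
noncomputable def lsEst {Ω : Type*} (d N : ℕ) (P : Fin N → Ω → Matrix (Fin d) (Fin d) ℂ)
    (ω : Ω) : Matrix (Fin d) (Fin d) ℂ :=
  (N : ℂ)⁻¹ • ∑ i, ((d + 1 : ℂ) • P i ω - 1)

/-- Squared Frobenius norm `‖A‖₂² = Tr(A* A)`. -/
noncomputable def frobSq {d : ℕ} (A : Matrix (Fin d) (Fin d) ℂ) : ℝ :=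
  (Matrix.trace (Aᴴ * A)).re

/-- Frobenius norm `‖A‖₂ = (Tr(A* A))^{1/2}`. -/
noncomputable def frobNorm {d : ℕ} (A : Matrix (Fin d) (Fin d) ℂ) : ℝ :=
  Real.sqrt (Matrix.trace (Aᴴ * A)).re

/-- Operator norm (largest singular value) of a matrix, as the `ℓ² → ℓ²` operator norm. -/
noncomputable def opNorm {d : ℕ} (A : Matrix (Fin d) (Fin d) ℂ) : ℝ :=
  ‖LinearMap.toContinuousLinearMap (Matrix.toEuclideanLin A)‖

/-- Trace norm `‖A‖₁ = Tr|A|`: the sum of the singular values of `A`. -/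
noncomputable def traceNorm {d : ℕ} (A : Matrix (Fin d) (Fin d) ℂ) : ℝ :=
  ∑ i, Real.sqrt ((Matrix.posSemidef_conjTranspose_mul_self A).1.eigenvalues i)

/-- The rank-`r` density matrix `ρ_r = (1/r) Σ_{i=1}^r E_{ii}`. -/
noncomputable def rhoR (d r : ℕ) : Matrix (Fin d) (Fin d) ℂ :=
  (r : ℂ)⁻¹ • ∑ i : Fin d, if (i : ℕ) < r then Matrix.single i i 1 else 0

/-!
The `k`-th column of a Haar unitary is a random unit vector whose law is invariant under every
unitary, and the integral is `r⁻¹ ∑_{l < r} 𝔼 |U_lk|² |U_ik|² |U_jk|²`. Such moments are determined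
by invariance alone. Permutation matrices make them symmetric in the rows; since the column is a
unit vector, summing a moment over one more row gives back the smaller moment; and the unitary
sending `eₐ ↦ (θ eₐ + e_b)/√2`, averaged over `θ ∈ {1, i, -1, -i}`, gives
`𝔼 |U_ak|⁴ F = 2 𝔼 |U_ak|² |U_bk|² F` whenever `F` involves neither row `a` nor row `b`.
Hence `𝔼 ∏_{a ∈ s} |U_ak|² = 1/(d (d+1) ⋯ (d+|s|-1))` for distinct rows `s`, and adding a row
already in `s` instead doubles the result: `𝔼 |U_ik|⁴ |U_jk|² = 2/(d (d+1) (d+2))`.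
-/

noncomputable section

theorem Multiset.map_swap_eq_self {α : Type*} [DecidableEq α] {s : Multiset α} {a b : α}
    (ha : a ∉ s) (hb : b ∉ s) : s.map (Equiv.swap a b) = s :=
  (Multiset.map_congr rfl fun _ hx =>
    Equiv.swap_apply_of_ne_of_ne (ne_of_mem_of_not_mem hx ha) (ne_of_mem_of_not_mem hx hb)).trans
    (Multiset.map_id s)

theorem Complex.norm_I_pow (n : ℕ) : ‖I ^ n‖ = 1 := by
  rw [norm_pow, norm_I, one_pow]

theorem Complex.sum_norm_I_pow_mul_add_sq_sq (u v : ℂ) :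
    ∑ n : Fin 4, (‖I ^ (n : ℕ) * u + v‖ ^ 2) ^ 2 =
      4 * ((‖u‖ ^ 2 + ‖v‖ ^ 2) ^ 2 + 2 * ‖u‖ ^ 2 * ‖v‖ ^ 2) := by
  simp only [Fin.sum_univ_four, Fin.val_zero, Fin.val_one, Fin.val_two, Complex.sq_norm,
    Complex.normSq_apply]
  norm_num [pow_succ, I_mul_I]
  ring

section Unitary

variable {n : Type*} [Fintype n] [DecidableEq n]

def permUnitary {R : Type*} [CommRing R] [StarRing R] (σ : Equiv.Perm n) : unitaryGroup n R :=
  ⟨σ.permMatrix R, by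
    rw [mem_unitaryGroup_iff', star_eq_conjTranspose, conjTranspose_permMatrix,
      ← permMatrix_mul, mul_inv_cancel, permMatrix_one]⟩

theorem permUnitary_mul_apply {R : Type*} [CommRing R] [StarRing R] (σ : Equiv.Perm n)
    (U : unitaryGroup n R) (a b : n) :
    ((permUnitary σ * U : unitaryGroup n R) : Matrix n n R) a b = (U : Matrix n n R) (σ a) b :=
  congrFun (congrFun (PEquiv.toMatrix_toPEquiv_mul σ (U : Matrix n n R)) a) b

def mixMatrix (a b : n) (θ : ℂ) : Matrix n n ℂ :=
  of fun p q =>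
    if p = a then (Real.sqrt 2 : ℂ)⁻¹ * ((if q = a then θ else 0) + if q = b then 1 else 0)
    else if p = b then (Real.sqrt 2 : ℂ)⁻¹ * ((if q = a then θ else 0) - if q = b then 1 else 0)
    else if p = q then 1 else 0

theorem mixMatrix_mul_apply (a b : n) (θ : ℂ) (M : Matrix n n ℂ) (p q : n) :
    (mixMatrix a b θ * M) p q =
      if p = a then (Real.sqrt 2 : ℂ)⁻¹ * (θ * M a q + M b q)
      else if p = b then (Real.sqrt 2 : ℂ)⁻¹ * (θ * M a q - M b q)
      else M p q := by
  simp only [mixMatrix, mul_apply, of_apply]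
  split_ifs
  · simp [mul_add, add_mul, Finset.sum_add_distrib, ite_mul, mul_assoc]
  · simp [mul_sub, sub_mul, Finset.sum_sub_distrib, ite_mul, mul_assoc]
  · simp [ite_mul]

theorem mixMatrix_mem_unitaryGroup {a b : n} (hab : a ≠ b) {θ : ℂ} (hθ : ‖θ‖ = 1) :
    mixMatrix a b θ ∈ unitaryGroup n ℂ := by
  have hc : ((Real.sqrt 2 : ℂ)⁻¹) * (Real.sqrt 2 : ℂ)⁻¹ = 2⁻¹ := by
    rw [← mul_inv, ← Complex.ofReal_mul, Real.mul_self_sqrt zero_le_two, Complex.ofReal_ofNat]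
  have hθ' : θ * starRingEnd ℂ θ = 1 := by
    rw [Complex.mul_conj', hθ, Complex.ofReal_one, one_pow]
  rw [mem_unitaryGroup_iff]
  ext p q
  rw [mixMatrix_mul_apply]
  simp only [star_apply, mixMatrix, of_apply, one_apply]
  split_ifs <;> subst_vars <;> simp [Complex.conj_ofReal] at * <;>
    first
    | linear_combination (θ * starRingEnd ℂ θ + 1) * hc + hθ' / 2
    | linear_combination (Real.sqrt 2 : ℂ)⁻¹ * hθ'

def mixUnitary {a b : n} (hab : a ≠ b) {θ : ℂ} (hθ : ‖θ‖ = 1) : unitaryGroup n ℂ :=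
  ⟨mixMatrix a b θ, mixMatrix_mem_unitaryGroup hab hθ⟩

def entryNormSq (U : unitaryGroup n ℂ) (a k : n) : ℝ :=
  ‖(U : Matrix n n ℂ) a k‖ ^ 2

theorem entryNormSq_nonneg (U : unitaryGroup n ℂ) (a k : n) : 0 ≤ entryNormSq U a k :=
  sq_nonneg _

theorem sum_entryNormSq (U : unitaryGroup n ℂ) (k : n) : ∑ a, entryNormSq U a k = 1 := by
  have h := congrFun (congrFun (mem_unitaryGroup_iff'.mp U.2) k) k
  simp only [mul_apply, star_apply, one_apply_eq] at h
  apply Complex.ofReal_injective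
  push_cast [entryNormSq]
  simp_rw [← Complex.conj_mul']
  exact h

theorem entryNormSq_le_one (U : unitaryGroup n ℂ) (a k : n) : entryNormSq U a k ≤ 1 :=
  sum_entryNormSq U k ▸
    Finset.single_le_sum (fun m _ => entryNormSq_nonneg U m k) (Finset.mem_univ a)

theorem entryNormSq_permUnitary_mul (σ : Equiv.Perm n) (U : unitaryGroup n ℂ) (a k : n) :
    entryNormSq (permUnitary σ * U) a k = entryNormSq U (σ a) k := by
  rw [entryNormSq, permUnitary_mul_apply, entryNormSq]

theorem entryNormSq_mixUnitary_mul_self {a b : n} (hab : a ≠ b) {θ : ℂ} (hθ : ‖θ‖ = 1)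
    (U : unitaryGroup n ℂ) (k : n) :
    entryNormSq (mixUnitary hab hθ * U) a k =
      ‖θ * (U : Matrix n n ℂ) a k + (U : Matrix n n ℂ) b k‖ ^ 2 / 2 := by
  have hc : ‖(Real.sqrt 2 : ℂ)⁻¹‖ ^ 2 = 2⁻¹ := by
    rw [norm_inv, inv_pow, Complex.norm_real, Real.norm_eq_abs, sq_abs,
      Real.sq_sqrt zero_le_two]
  change ‖(mixMatrix a b θ * (U : Matrix n n ℂ)) a k‖ ^ 2 = _
  rw [mixMatrix_mul_apply, if_pos rfl, norm_mul, mul_pow, hc, inv_mul_eq_div]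

theorem entryNormSq_mixUnitary_mul_of_ne {a b m : n} (hab : a ≠ b) {θ : ℂ} (hθ : ‖θ‖ = 1)
    (hma : m ≠ a) (hmb : m ≠ b) (U : unitaryGroup n ℂ) (k : n) :
    entryNormSq (mixUnitary hab hθ * U) m k = entryNormSq U m k := by
  change ‖(mixMatrix a b θ * (U : Matrix n n ℂ)) m k‖ ^ 2 = _
  rw [mixMatrix_mul_apply, if_neg hma, if_neg hmb, entryNormSq]

/-- Averaging over the phases `θ = iⁿ` kills the cross terms `Re (θ Uₐₖ conj U_bk)`. -/
theorem sum_sq_entryNormSq_mixUnitary_mul {a b : n} (hab : a ≠ b) (U : unitaryGroup n ℂ)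
    (k : n) :
    ∑ m : Fin 4, entryNormSq (mixUnitary hab (Complex.norm_I_pow m) * U) a k ^ 2 =
      (entryNormSq U a k + entryNormSq U b k) ^ 2 + 2 * entryNormSq U a k * entryNormSq U b k := by
  simp only [entryNormSq_mixUnitary_mul_self, div_pow, ← Finset.sum_div,
    Complex.sum_norm_I_pow_mul_add_sq_sq]
  unfold entryNormSq
  ring

def entryNormSqProd (U : unitaryGroup n ℂ) (s : Multiset n) (k : n) : ℝ :=
  (s.map fun a => entryNormSq U a k).prod

@[simp]
theorem entryNormSqProd_zero (U : unitaryGroup n ℂ) (k : n) : entryNormSqProd U 0 k = 1 :=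
  Multiset.prod_zero

@[simp]
theorem entryNormSqProd_cons (U : unitaryGroup n ℂ) (a : n) (s : Multiset n) (k : n) :
    entryNormSqProd U (a ::ₘ s) k = entryNormSq U a k * entryNormSqProd U s k := by
  rw [entryNormSqProd, Multiset.map_cons, Multiset.prod_cons, entryNormSqProd]

theorem abs_entryNormSqProd_le_one (U : unitaryGroup n ℂ) (s : Multiset n) (k : n) :
    |entryNormSqProd U s k| ≤ 1 := by
  rw [entryNormSqProd, abs_of_nonneg (Multiset.prod_map_nonneg fun a _ => entryNormSq_nonneg U a k)]
  simpa using Multiset.prod_map_le_prod_map₀ _ (fun _ => (1 : ℝ))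
    (fun a _ => entryNormSq_nonneg U a k) (fun a _ => entryNormSq_le_one U a k)

theorem entryNormSqProd_permUnitary_mul (σ : Equiv.Perm n) (U : unitaryGroup n ℂ)
    (s : Multiset n) (k : n) :
    entryNormSqProd (permUnitary σ * U) s k = entryNormSqProd U (s.map σ) k := by
  simp only [entryNormSqProd, Multiset.map_map, Function.comp_def, entryNormSq_permUnitary_mul]

theorem sum_entryNormSqProd_mixUnitary_mul {a b : n} (hab : a ≠ b) {s : Multiset n} (ha : a ∉ s)
    (hb : b ∉ s) (U : unitaryGroup n ℂ) (k : n) :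
    ∑ m : Fin 4, entryNormSqProd (mixUnitary hab (Complex.norm_I_pow m) * U) (a ::ₘ a ::ₘ s) k =
      entryNormSqProd U (a ::ₘ a ::ₘ s) k + entryNormSqProd U (b ::ₘ b ::ₘ s) k +
        4 * entryNormSqProd U (a ::ₘ b ::ₘ s) k := by
  have hs (m : Fin 4) :
      entryNormSqProd (mixUnitary hab (Complex.norm_I_pow m) * U) s k = entryNormSqProd U s k :=
    congrArg Multiset.prod <| Multiset.map_congr rfl fun e he =>
      entryNormSq_mixUnitary_mul_of_ne hab _ (ne_of_mem_of_not_mem he ha)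
        (ne_of_mem_of_not_mem he hb) U k
  simp only [entryNormSqProd_cons, hs, ← mul_assoc, ← sq, ← Finset.sum_mul,
    sum_sq_entryNormSq_mixUnitary_mul]
  ring

end Unitary

section Moments

variable {d : ℕ}

theorem measurable_unitaryGroup_apply (a b : Fin d) :
    Measurable fun U : unitaryGroup (Fin d) ℂ => (U : Matrix (Fin d) (Fin d) ℂ) a b :=
  (measurable_pi_apply b).comp ((measurable_pi_apply a).comp measurable_subtype_coe)

instance : MeasurableMul₂ (unitaryGroup (Fin d) ℂ) where
  measurable_mul := by
    refine Measurable.subtype_mk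
      (measurable_pi_lambda _ fun a => measurable_pi_lambda _ fun b => ?_)
    simp only [unitaryGroup, mul_apply]
    exact Finset.measurable_sum _ fun m _ =>
      ((measurable_unitaryGroup_apply a m).comp measurable_fst).mul
        ((measurable_unitaryGroup_apply m b).comp measurable_snd)

theorem measurable_entryNormSqProd (s : Multiset (Fin d)) (k : Fin d) :
    Measurable fun U => entryNormSqProd U s k := by
  induction s using Multiset.induction_on with
  | empty => simp
  | cons a s ih =>
    simp only [entryNormSqProd_cons]
    exact ((measurable_unitaryGroup_apply a k).norm.pow_const 2).mul ih

variable (μ : Measure (unitaryGroup (Fin d) ℂ)) (k : Fin d)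

def columnMoment (s : Multiset (Fin d)) : ℝ :=
  ∫ U, entryNormSqProd U s k ∂μ

theorem integrable_entryNormSqProd [IsFiniteMeasure μ] (s : Multiset (Fin d)) :
    Integrable (fun U => entryNormSqProd U s k) μ :=
  Integrable.of_bound (measurable_entryNormSqProd s k).aestronglyMeasurable 1
    (ae_of_all _ fun U => abs_entryNormSqProd_le_one U s k)

theorem columnMoment_zero [IsProbabilityMeasure μ] : columnMoment μ k 0 = 1 := by
  simp [columnMoment]

theorem sum_columnMoment_cons [IsFiniteMeasure μ] (s : Multiset (Fin d)) :
    ∑ m, columnMoment μ k (m ::ₘ s) = columnMoment μ k s := by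
  simp only [columnMoment]
  rw [← integral_finsetSum _ fun m _ => integrable_entryNormSqProd μ k (m ::ₘ s)]
  simp only [entryNormSqProd_cons, ← Finset.sum_mul, sum_entryNormSq, one_mul]

variable [μ.IsMulLeftInvariant]

theorem columnMoment_map_perm (σ : Equiv.Perm (Fin d)) (s : Multiset (Fin d)) :
    columnMoment μ k (s.map σ) = columnMoment μ k s := by
  simp only [columnMoment, ← entryNormSqProd_permUnitary_mul,
    integral_mul_left_eq_self (fun U => entryNormSqProd U s k)]

theorem columnMoment_cons_eq_of_notMem {s : Multiset (Fin d)} {a b : Fin d} (ha : a ∉ s)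
    (hb : b ∉ s) : columnMoment μ k (a ::ₘ s) = columnMoment μ k (b ::ₘ s) := by
  rw [← columnMoment_map_perm μ k (Equiv.swap a b), Multiset.map_cons, Equiv.swap_apply_left,
    Multiset.map_swap_eq_self ha hb]

theorem columnMoment_cons_eq_of_mem {s : Multiset (Fin d)} (hs : s.Nodup) {a b : Fin d}
    (ha : a ∈ s) (hb : b ∈ s) : columnMoment μ k (a ::ₘ s) = columnMoment μ k (b ::ₘ s) := by
  obtain rfl | hab := eq_or_ne a b
  · rfl
  obtain ⟨t, rfl⟩ := Multiset.exists_cons_of_mem ha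
  obtain ⟨u, rfl⟩ := Multiset.exists_cons_of_mem ((Multiset.mem_cons.mp hb).resolve_left hab.symm)
  simp only [Multiset.nodup_cons, Multiset.mem_cons, not_or] at hs
  rw [← columnMoment_map_perm μ k (Equiv.swap a b)]
  simp only [Multiset.map_cons, Equiv.swap_apply_left, Equiv.swap_apply_right,
    Multiset.map_swap_eq_self hs.1.2 hs.2.1, Multiset.cons_swap a b]

theorem columnMoment_cons_cons_self [IsFiniteMeasure μ] {s : Multiset (Fin d)} {a b : Fin d}
    (hab : a ≠ b) (ha : a ∉ s) (hb : b ∉ s) :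
    columnMoment μ k (a ::ₘ a ::ₘ s) = 2 * columnMoment μ k (a ::ₘ b ::ₘ s) := by
  have hint (t : Multiset (Fin d)) := integrable_entryNormSqProd μ k t
  have hbb : columnMoment μ k (b ::ₘ b ::ₘ s) = columnMoment μ k (a ::ₘ a ::ₘ s) := by
    rw [← columnMoment_map_perm μ k (Equiv.swap a b)]
    simp only [Multiset.map_cons, Equiv.swap_apply_right, Multiset.map_swap_eq_self ha hb]
  have key : 4 * columnMoment μ k (a ::ₘ a ::ₘ s) = columnMoment μ k (a ::ₘ a ::ₘ s) +
      columnMoment μ k (b ::ₘ b ::ₘ s) + 4 * columnMoment μ k (a ::ₘ b ::ₘ s) :=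
    calc 4 * columnMoment μ k (a ::ₘ a ::ₘ s)
        = ∑ m : Fin 4, ∫ U, entryNormSqProd (mixUnitary hab (Complex.norm_I_pow m) * U)
            (a ::ₘ a ::ₘ s) k ∂μ := by
          simp only [columnMoment, Finset.sum_const, Finset.card_univ, Fintype.card_fin,
            integral_mul_left_eq_self (fun U => entryNormSqProd U (a ::ₘ a ::ₘ s) k)]
          norm_num
      _ = ∫ U, ∑ m : Fin 4, entryNormSqProd (mixUnitary hab (Complex.norm_I_pow m) * U)
            (a ::ₘ a ::ₘ s) k ∂μ :=
          (integral_finsetSum _ fun m _ => (hint _).comp_mul_left _).symm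
      _ = ∫ U, entryNormSqProd U (a ::ₘ a ::ₘ s) k + entryNormSqProd U (b ::ₘ b ::ₘ s) k +
            4 * entryNormSqProd U (a ::ₘ b ::ₘ s) k ∂μ := by
          simp only [sum_entryNormSqProd_mixUnitary_mul hab ha hb]
      _ = _ := by
          rw [integral_add ?_ ((hint _).const_mul 4), integral_add (hint _) (hint _),
            integral_const_mul]
          · rfl
          · exact (hint _).add (hint _)
  linarith

theorem columnMoment_cons_of_mem_of_notMem [IsFiniteMeasure μ] {s : Multiset (Fin d)}
    (hs : s.Nodup) {a e : Fin d} (ha : a ∈ s) (he : e ∉ s) :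
    columnMoment μ k (a ::ₘ s) = 2 * columnMoment μ k (e ::ₘ s) := by
  obtain ⟨t, rfl⟩ := Multiset.exists_cons_of_mem ha
  rw [Multiset.nodup_cons] at hs
  rw [Multiset.mem_cons, not_or] at he
  rw [Multiset.cons_swap e a]
  exact columnMoment_cons_cons_self μ k (Ne.symm he.1) hs.1 he.2

theorem columnMoment_cons_mul_eq [IsFiniteMeasure μ] {s : Multiset (Fin d)} (hs : s.Nodup)
    (m m' : Fin d) :
    (1 + s.count m') * columnMoment μ k (m ::ₘ s) =
      (1 + s.count m) * columnMoment μ k (m' ::ₘ s) := by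
  by_cases hm : m ∈ s <;> by_cases hm' : m' ∈ s <;>
    simp only [Multiset.count_eq_one_of_mem hs, Multiset.count_eq_zero.mpr, hm, hm',
      not_false_eq_true, Nat.cast_one, Nat.cast_zero]
  · rw [columnMoment_cons_eq_of_mem μ k hs hm hm']
  · rw [columnMoment_cons_of_mem_of_notMem μ k hs hm hm']; ring
  · rw [columnMoment_cons_of_mem_of_notMem μ k hs hm' hm]; ring
  · rw [columnMoment_cons_eq_of_notMem μ k hm hm']

theorem columnMoment_cons_of_nodup [IsFiniteMeasure μ] {s : Multiset (Fin d)} (hs : s.Nodup)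
    (m : Fin d) :
    columnMoment μ k (m ::ₘ s) =
      (1 + s.count m) * columnMoment μ k s / (d + Multiset.card s) := by
  have hd : (0 : ℝ) < d + Multiset.card s := by have := m.pos; positivity
  have hweights : ∑ m' : Fin d, ((1 : ℝ) + s.count m') = d + Multiset.card s := by
    rw [Finset.sum_add_distrib]
    simp [← Nat.cast_sum, Multiset.sum_count_eq_card]
  rw [eq_div_iff hd.ne', ← sum_columnMoment_cons μ k s, ← hweights, Finset.mul_sum,
    Finset.mul_sum]
  exact Finset.sum_congr rfl fun m' _ => (mul_comm _ _).trans (columnMoment_cons_mul_eq μ k hs m m')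

theorem columnMoment_of_nodup [IsProbabilityMeasure μ] {s : Multiset (Fin d)} (hs : s.Nodup) :
    columnMoment μ k s = ((d.ascFactorial (Multiset.card s) : ℕ) : ℝ)⁻¹ := by
  induction s using Multiset.induction_on with
  | empty => simp [columnMoment_zero]
  | cons m s ih =>
    rw [Multiset.nodup_cons] at hs
    rw [columnMoment_cons_of_nodup μ k hs.2, ih hs.2, Multiset.count_eq_zero.mpr hs.1,
      Multiset.card_cons, Nat.ascFactorial_succ]
    push_cast
    field_simp
    norm_num

end Moments

theorem star_mul_diagonal_mul_apply_self {n R : Type*} [Fintype n] [DecidableEq n]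
    [CommSemiring R] [StarRing R] (w : n → R) (U : Matrix n n R) (k : n) :
    (star U * diagonal w * U) k k = ∑ l, w l * (star (U l k) * U l k) := by
  rw [mul_apply]
  simp only [mul_diagonal, star_apply]
  exact Finset.sum_congr rfl fun l _ => by ring

theorem rhoR_eq_diagonal (d r : ℕ) :
    rhoR d r = diagonal fun l : Fin d => if (l : ℕ) < r then (r : ℂ)⁻¹ else 0 := by
  ext m n
  simp only [rhoR, Matrix.smul_apply, Matrix.sum_apply,
    apply_ite (fun M : Matrix (Fin d) (Fin d) ℂ => M m n)]
  rw [Fintype.sum_eq_single m fun l hl => by simp [hl]]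
  by_cases h : m = n
  · subst h; simp [diagonal]
  · simp [h]

theorem re_star_mul_rhoR_mul_apply_self {d : ℕ} (r : ℕ) (U : Matrix (Fin d) (Fin d) ℂ)
    (k : Fin d) :
    ((star U * rhoR d r * U) k k).re = (r : ℝ)⁻¹ * ∑ l : Fin d with l.val < r, ‖U l k‖ ^ 2 := by
  rw [rhoR_eq_diagonal, star_mul_diagonal_mul_apply_self, Finset.sum_filter, Finset.mul_sum,
    Complex.re_sum]
  refine Finset.sum_congr rfl fun l _ => ?_
  split_ifs
  · rw [Complex.star_def, Complex.conj_mul', ← Complex.ofReal_pow, ← Complex.ofReal_natCast,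
      ← Complex.ofReal_inv, ← Complex.ofReal_mul, Complex.ofReal_re]
  · simp

end

theorem covariant_ls_B_entry_moment_general
    (d r : ℕ)
    (μ : Measure (Matrix.unitaryGroup (Fin d) ℂ)) [IsProbabilityMeasure μ]
    (hμ : ∀ V : Matrix.unitaryGroup (Fin d) ℂ, μ.map (fun U => V * U) = μ)
    (k i j : Fin d) (hi : (i : ℕ) < r) (hj : r ≤ (j : ℕ)) :
    (d : ℝ) * ((d : ℝ) + 1) ^ 2 *
      ∫ U, ((star (U : Matrix (Fin d) (Fin d) ℂ) * rhoR d r * (U : Matrix (Fin d) (Fin d) ℂ)) k k).re *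
        (‖(U : Matrix (Fin d) (Fin d) ℂ) i k‖ ^ 2 * ‖(U : Matrix (Fin d) (Fin d) ℂ) j k‖ ^ 2) ∂μ
      = (((r : ℝ) + 1) / (r : ℝ)) * (((d : ℝ) + 1) / ((d : ℝ) + 2)) := by
  have : μ.IsMulLeftInvariant := ⟨hμ⟩
  have hij : i ≠ j := Fin.ne_of_val_ne (by omega)
  have hr : (r : ℝ) ≠ 0 := Nat.cast_ne_zero.mpr (by omega)
  have hd : (d : ℝ) ≠ 0 := Nat.cast_ne_zero.mpr (by omega)
  have hs : (i ::ₘ j ::ₘ 0).Nodup := by simp [hij]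
  have hweights : ∑ l : Fin d with l.val < r, ((1 : ℝ) + (i ::ₘ j ::ₘ 0).count l) = r + 1 := by
    have hrd : (r : ℝ) ≤ d := Nat.cast_le.mpr (by omega)
    simp [Finset.sum_add_distrib, Multiset.count_cons, Multiset.count_singleton,
      Fin.card_filter_val_lt, hi, hj, hrd]
  have hintegrand (U : unitaryGroup (Fin d) ℂ) :
      ((star (U : Matrix (Fin d) (Fin d) ℂ) * rhoR d r * U) k k).re *
          (‖(U : Matrix (Fin d) (Fin d) ℂ) i k‖ ^ 2 * ‖(U : Matrix (Fin d) (Fin d) ℂ) j k‖ ^ 2) =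
        (r : ℝ)⁻¹ * ∑ l : Fin d with l.val < r, entryNormSqProd U (l ::ₘ i ::ₘ j ::ₘ 0) k := by
    rw [re_star_mul_rhoR_mul_apply_self, mul_assoc, Finset.sum_mul]
    simp only [entryNormSqProd_cons, entryNormSqProd_zero, mul_one, entryNormSq]
  rw [integral_congr_ae (ae_of_all _ hintegrand), integral_const_mul,
    integral_finsetSum _ fun l _ => integrable_entryNormSqProd μ k _]
  simp only [← columnMoment.eq_1]
  rw [Finset.sum_congr rfl fun l _ => columnMoment_cons_of_nodup μ k hs l,
    columnMoment_of_nodup μ k hs, ← Finset.sum_div, ← Finset.sum_mul, hweights]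
  simp [Nat.ascFactorial]
  field_simp

/-- Second moment of an entry of the off-diagonal `B` block of the
covariant-measurement LS estimator for `ρ_r`:
`d(d+1)²·∫ ⟨e_k, U*ρ_r U e_k⟩·|U_{ik}|²|U_{jk}|² dU = ((r+1)/r)·((d+1)/(d+2))`
for `1 ≤ i ≤ r < j ≤ d`. -/
theorem covariant_ls_B_entry_moment
    (d r : ℕ) (hd : 2 ≤ d) (hr : 1 ≤ r) (hrd : r < d)
    (μ : Measure (Matrix.unitaryGroup (Fin d) ℂ)) [IsProbabilityMeasure μ]
    (hμ : ∀ V : Matrix.unitaryGroup (Fin d) ℂ, μ.map (fun U => V * U) = μ)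
    (k i j : Fin d) (hi : (i : ℕ) < r) (hj : r ≤ (j : ℕ)) :
    (d : ℝ) * ((d : ℝ) + 1) ^ 2 *
      ∫ U, ((star (U : Matrix (Fin d) (Fin d) ℂ) * rhoR d r * (U : Matrix (Fin d) (Fin d) ℂ)) k k).re *
        (‖(U : Matrix (Fin d) (Fin d) ℂ) i k‖ ^ 2 * ‖(U : Matrix (Fin d) (Fin d) ℂ) j k‖ ^ 2) ∂μ
      = (((r : ℝ) + 1) / (r : ℝ)) * (((d : ℝ) + 1) / ((d : ℝ) + 2)) :=
  covariant_ls_B_entry_moment_general d r μ hμ k i j hi hj
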